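/- arXiv:2504.17652 — 2 statements merged into one kernel-verified Lean document; each statement's English description precedes it below -/
import Mathlib

section
/- For τ ∈ ℂ with τ not of the form 2πik/β for k ∈ ℤ, the function R_τ(φ, φ') = -cosh(τ(|φ - φ'| - β/2)) / (2τ sinh(βτ/2)) on (ℝ/βℤ)² is the integral kernel of the inverse of the operator d²/dφ² - τ² on L²(ℝ/βℤ): that is, for every f ∈ L²(ℝ/βℤ), the function u(φ) = ∫₀^β R_τ(φ, φ') f(φ') dφ' satisfies u'' - τ²u = f. -/
open scoped Real
open Complex intervalIntegral

open Function Set Topology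

/-! By periodicity, `u(x)` may be computed over the window `[a, a + β]` with `a = φ - β/2`; for `x`
in it, the kernel `R_τ(x, y)` is `-cosh(τ(x - y) ∓ βτ/2) / (2τ sinh(βτ/2))` according as `y ≤ x`
or `y ≥ x`. So near `φ`, `u` is a difference of two Volterra integrals
`∫_c^x cosh(τ(x - y) + κ) f(y) dy`. Writing `cosh` with exponentials and applying Duhamel's
formula `(∫_c^x e^{μ(x-y)} f(y) dy)' = μ ∫_c^x e^{μ(x-y)} f(y) dy + f(x)`, the derivative of such
an integral is `cosh κ · f + τ · (the same integral with sinh)`, and symmetrically for `sinh`.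
In `u'` the boundary terms `cosh(∓βτ/2) f` cancel; in `u''` the terms `τ sinh(∓βτ/2) f` add up
to `-2τ sinh(βτ/2) f`, which the normalisation `-1 / (2τ sinh(βτ/2))` turns into `f`. -/

theorem Complex.sinh_eq_zero_iff {z : ℂ} : sinh z = 0 ↔ ∃ k : ℤ, z = k * π * I := by
  constructor
  · intro h
    obtain ⟨k, hk⟩ := sin_eq_zero_iff.1 (by rw [sin_mul_I, h, zero_mul] : sin (z * I) = 0)
    exact ⟨-k, by push_cast; linear_combination (-I) * hk + z * I_sq⟩
  · rintro ⟨k, rfl⟩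
    rw [sinh_mul_I, sin_int_mul_pi, zero_mul]

theorem apply_fract_eq_of_mem_Icc {α γ : Type*} [Ring α] [LinearOrder α] [IsStrictOrderedRing α]
    [FloorRing α] {g : α → γ} (hg : g 0 = g 1) {t : α} (ht : t ∈ Icc 0 1) :
    g (Int.fract t) = g t := by
  rcases ht.2.eq_or_lt with rfl | h
  · simpa using hg
  · rw [Int.fract_eq_self.2 ⟨ht.1, h⟩]

section Convolution

variable {f : ℝ → ℂ}

noncomputable def expConv (μ : ℂ) (c : ℝ) (f : ℝ → ℂ) (x : ℝ) : ℂ :=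
  ∫ y in c..x, exp (μ * (x - y)) * f y

noncomputable def coshConv (μ κ : ℂ) (c : ℝ) (f : ℝ → ℂ) (x : ℝ) : ℂ :=
  ∫ y in c..x, cosh (μ * (x - y) + κ) * f y

noncomputable def sinhConv (μ κ : ℂ) (c : ℝ) (f : ℝ → ℂ) (x : ℝ) : ℂ :=
  ∫ y in c..x, sinh (μ * (x - y) + κ) * f y

theorem hasDerivAt_expConv (hf : Continuous f) (μ : ℂ) (c x : ℝ) :
    HasDerivAt (expConv μ c f) (μ * expConv μ c f x + f x) x := by
  have hsplit : expConv μ c f = fun x : ℝ => exp (μ * x) * ∫ y in c..x, exp (-(μ * y)) * f y := by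
    funext x
    rw [expConv, ← integral_const_mul]
    congr 1 with y
    rw [← mul_assoc, ← exp_add]
    ring_nf
  have hexp : HasDerivAt (fun x : ℝ => exp (μ * x)) (μ * exp (μ * x)) x := by
    simpa [mul_comm] using ((hasDerivAt_id (x : ℂ)).const_mul μ).cexp.comp_ofReal
  have hint := ((by fun_prop : Continuous fun y : ℝ => exp (-(μ * y)) * f y)
    |>.integral_hasStrictDerivAt c x).hasDerivAt
  rw [hsplit]
  refine (hexp.mul hint).congr_deriv ?_
  rw [← mul_assoc (exp _), ← exp_add, add_neg_cancel, exp_zero]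
  ring

theorem coshConv_eq (hf : Continuous f) (μ κ : ℂ) (c x : ℝ) :
    coshConv μ κ c f x = (exp κ * expConv μ c f x + exp (-κ) * expConv (-μ) c f x) / 2 := by
  rw [coshConv, expConv, expConv, ← integral_const_mul, ← integral_const_mul,
    ← integral_add (Continuous.intervalIntegrable (by fun_prop) _ _)
      (Continuous.intervalIntegrable (by fun_prop) _ _), ← integral_div]
  congr 1 with y
  simp only [cosh, neg_add, exp_add, neg_mul]
  ring

theorem sinhConv_eq (hf : Continuous f) (μ κ : ℂ) (c x : ℝ) :
    sinhConv μ κ c f x = (exp κ * expConv μ c f x - exp (-κ) * expConv (-μ) c f x) / 2 := by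
  rw [sinhConv, expConv, expConv, ← integral_const_mul, ← integral_const_mul,
    ← integral_sub (Continuous.intervalIntegrable (by fun_prop) _ _)
      (Continuous.intervalIntegrable (by fun_prop) _ _), ← integral_div]
  congr 1 with y
  simp only [sinh, neg_add, exp_add, neg_mul]
  ring

theorem hasDerivAt_coshConv (hf : Continuous f) (μ κ : ℂ) (c x : ℝ) :
    HasDerivAt (coshConv μ κ c f) (cosh κ * f x + μ * sinhConv μ κ c f x) x := by
  rw [show coshConv μ κ c f = _ from funext (coshConv_eq hf μ κ c), sinhConv_eq hf]
  refine ((((hasDerivAt_expConv hf μ c x).const_mul (exp κ)).add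
    ((hasDerivAt_expConv hf (-μ) c x).const_mul (exp (-κ)))).div_const 2).congr_deriv ?_
  linear_combination (-(f x) / 2) * two_cosh κ

theorem hasDerivAt_sinhConv (hf : Continuous f) (μ κ : ℂ) (c x : ℝ) :
    HasDerivAt (sinhConv μ κ c f) (sinh κ * f x + μ * coshConv μ κ c f x) x := by
  rw [show sinhConv μ κ c f = _ from funext (sinhConv_eq hf μ κ c), coshConv_eq hf]
  refine ((((hasDerivAt_expConv hf μ c x).const_mul (exp κ)).sub
    ((hasDerivAt_expConv hf (-μ) c x).const_mul (exp (-κ)))).div_const 2).congr_deriv ?_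
  linear_combination (-(f x) / 2) * two_sinh κ

theorem deriv_deriv_coshConv_sub (hf : Continuous f) (μ κ : ℂ) (a b x : ℝ) :
    deriv (deriv (coshConv μ (-κ) a f - coshConv μ κ b f)) x =
      μ ^ 2 * (coshConv μ (-κ) a f - coshConv μ κ b f) x - 2 * μ * sinh κ * f x := by
  have hderiv : deriv (coshConv μ (-κ) a f - coshConv μ κ b f) =
      fun x => μ * (sinhConv μ (-κ) a f - sinhConv μ κ b f) x := by
    funext x
    refine (((hasDerivAt_coshConv hf μ (-κ) a x).sub
      (hasDerivAt_coshConv hf μ κ b x)).congr_deriv ?_).deriv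
    rw [cosh_neg, Pi.sub_apply]
    ring
  rw [hderiv, (((hasDerivAt_sinhConv hf μ (-κ) a x).sub
    (hasDerivAt_sinhConv hf μ κ b x)).const_mul μ).deriv, sinh_neg, Pi.sub_apply]
  ring

end Convolution

noncomputable def coshProfile (τ : ℂ) (β t : ℝ) : ℂ :=
  cosh (τ * ((β * t - β / 2 : ℝ) : ℂ))

noncomputable def periodicCosh (τ : ℂ) (β s : ℝ) : ℂ :=
  coshProfile τ β (Int.fract (s / β))

theorem coshProfile_zero (τ : ℂ) (β : ℝ) : coshProfile τ β 0 = coshProfile τ β 1 := by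
  rw [coshProfile, coshProfile, ← cosh_neg, ← mul_neg]
  push_cast
  ring_nf

theorem continuous_periodicCosh (τ : ℂ) (β : ℝ) : Continuous (periodicCosh τ β) :=
  ((by unfold coshProfile; fun_prop : Continuous (coshProfile τ β)).continuousOn.comp_fract''
    (coshProfile_zero τ β)).comp (continuous_id.div_const β)

theorem periodic_periodicCosh (τ : ℂ) {β : ℝ} (hβ : β ≠ 0) : Periodic (periodicCosh τ β) β :=
  fun s => by rw [periodicCosh, periodicCosh, add_div, div_self hβ, Int.fract_add_one]

theorem periodicCosh_of_mem_Icc (τ : ℂ) {β s : ℝ} (hβ : 0 < β) (hs : s ∈ Icc 0 β) :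
    periodicCosh τ β s = cosh (τ * s - τ * β / 2) := by
  rw [periodicCosh, apply_fract_eq_of_mem_Icc (coshProfile_zero τ β)
    ⟨div_nonneg hs.1 hβ.le, div_le_one_of_le₀ hs.2 hβ.le⟩, coshProfile, mul_div_cancel₀ s hβ.ne']
  push_cast
  ring_nf

theorem periodicCosh_of_mem_Icc_neg (τ : ℂ) {β s : ℝ} (hβ : 0 < β) (hs : s ∈ Icc (-β) 0) :
    periodicCosh τ β s = cosh (τ * s + τ * β / 2) := by
  rw [← periodic_periodicCosh τ hβ.ne' s,
    periodicCosh_of_mem_Icc τ hβ ⟨by linarith [hs.1], by linarith [hs.2]⟩]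
  push_cast
  ring_nf

theorem integral_periodicCosh_mul_eq {f : ℝ → ℂ} {β : ℝ} (hβ : 0 < β) (hf : Continuous f)
    (hper : Periodic f β) (τ : ℂ) {a x : ℝ} (hx : x ∈ Icc a (a + β)) :
    ∫ y in 0..β, periodicCosh τ β (x - y) * f y =
      coshConv τ (-(β * τ / 2)) a f x - coshConv τ (β * τ / 2) (a + β) f x := by
  have hcont : Continuous fun y => periodicCosh τ β (x - y) * f y :=
    ((continuous_periodicCosh τ β).comp (continuous_const.sub continuous_id)).mul hf
  have hperiodic : Periodic (fun y => periodicCosh τ β (x - y) * f y) β := fun y => by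
    show periodicCosh τ β (x - (y + β)) * f (y + β) = _
    rw [hper, ← periodic_periodicCosh τ hβ.ne' (x - (y + β))]
    ring_nf
  have hshift := hperiodic.intervalIntegral_add_eq 0 a
  rw [zero_add] at hshift
  rw [hshift,
    ← integral_add_adjacent_intervals (hcont.intervalIntegrable a x)
      (hcont.intervalIntegrable x (a + β)),
    coshConv, coshConv, integral_symm (a + β) x, ← sub_eq_add_neg]
  congr 1
  · refine integral_congr fun y hy => ?_
    rw [uIcc_of_le hx.1] at hy
    rw [periodicCosh_of_mem_Icc τ hβ ⟨by linarith [hy.2], by linarith [hy.1, hx.2]⟩]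
    push_cast
    ring_nf
  · refine integral_congr fun y hy => ?_
    rw [uIcc_of_ge hx.2] at hy
    rw [periodicCosh_of_mem_Icc_neg τ hβ ⟨by linarith [hy.2, hx.1], by linarith [hy.1]⟩]
    push_cast
    ring_nf

/-- The function `R_τ(φ,φ') = -cosh(τ(|φ-φ'| - β/2))/(2τ sinh(βτ/2))` (with `|φ-φ'|` the
representative `β·fract((φ-φ')/β) ∈ [0,β)` of `φ-φ'` on the circle `ℝ/βℤ`) is, for `τ` not of
the form `2πik/β`, the continuous integral kernel of the inverse of `d²/dφ² - τ²` on the circle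
of circumference `β`: for continuous `β`-periodic `f`, the function
`u(φ) = ∫₀^β R_τ(φ,φ') f(φ') dφ'` satisfies `u'' - τ²u = f`. -/
theorem circle_resolvent_kernel (β : ℝ) (hβ : 0 < β) (τ : ℂ)
    (hτ : ∀ k : ℤ, τ ≠ 2 * π * Complex.I * k / β)
    (f : ℝ → ℂ) (hf : Continuous f) (hper : ∀ φ : ℝ, f (φ + β) = f φ)
    (R : ℝ → ℝ → ℂ)
    (hR : ∀ φ φ' : ℝ, R φ φ' =
      -Complex.cosh (τ * ((β * Int.fract ((φ - φ') / β) - β / 2 : ℝ) : ℂ)) /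
        (2 * τ * Complex.sinh ((β : ℂ) * τ / 2)))
    (u : ℝ → ℂ) (hu : ∀ φ : ℝ, u φ = ∫ φ' in (0:ℝ)..β, R φ φ' * f φ') :
    Continuous (fun p : ℝ × ℝ => R p.1 p.2) ∧
      ∀ φ : ℝ, deriv (deriv u) φ - τ ^ 2 * u φ = f φ := by
  set D := 2 * τ * sinh ((β : ℂ) * τ / 2) with hDdef
  have hD : D ≠ 0 := by
    have hsinh : sinh ((β : ℂ) * τ / 2) ≠ 0 := fun h => by
      obtain ⟨k, hk⟩ := sinh_eq_zero_iff.1 h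
      refine hτ k ((eq_div_iff (by exact_mod_cast hβ.ne')).2 ?_)
      linear_combination 2 * hk
    exact mul_ne_zero (mul_ne_zero two_ne_zero (by rintro rfl; simp at hsinh)) hsinh
  have hR' : ∀ φ φ', R φ φ' = -periodicCosh τ β (φ - φ') / D := hR
  refine ⟨?_, fun p => ?_⟩
  · simp only [hR']
    exact ((continuous_periodicCosh τ β).comp (continuous_fst.sub continuous_snd)).neg.div_const D
  set a := p - β / 2 with ha
  set V := coshConv τ (-(β * τ / 2)) a f - coshConv τ (β * τ / 2) (a + β) f with hV
  have hwindow : u =ᶠ[𝓝 p] fun x => -D⁻¹ * V x := by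
    filter_upwards [Ioo_mem_nhds (show a < p by linarith) (show p < a + β by linarith)] with x hx
    rw [hu, hV, Pi.sub_apply, ← integral_periodicCosh_mul_eq hβ hf hper τ (Ioo_subset_Icc_self hx),
      ← integral_const_mul]
    refine integral_congr fun y _ => ?_
    rw [hR']
    ring
  rw [hwindow.deriv.deriv_eq, hwindow.eq_of_nhds, deriv_const_mul_field', deriv_const_mul_field']
  show -D⁻¹ * deriv (deriv V) p - _ = _
  rw [hV, deriv_deriv_coshConv_sub hf, ← hDdef]
  linear_combination f p * inv_mul_cancel₀ hD
end

section
/- Suppose the heat trace K(τ) = ∑_k e^{-λ_k τ} of a nonnegative operator with discrete spectrum satisfies K(τ) = A/(4πτ) + c₀ + O(e^{-b/τ}) as τ → 0⁺ for constants A, c₀, b > 0. Then for μ < 0, the function ζ_{Δ-μ}(s) = (1/Γ(s)) ∫₀^∞ e^{μτ} τ^{s-1} K(τ) dτ satisfies ζ_{Δ-μ}(s) - [A Γ(s-1)/(4π Γ(s) (-μ)^{s-1}) + c₀/(-μ)^s] = O(|μ|^{-N}) as μ → -∞ for every N, uniformly for s in compact subsets of ℂ where the left side is defined. -/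
open scoped Real
open Complex MeasureTheory Set

/-!
Subtracting the two-term expansion turns the error into `Γ(s)⁻¹` times the Laplace–Mellin
transform of the remainder `R(τ) = K(τ) - A/(4πτ) - c₀`, since `A/(4πτ)` and `c₀` transform
exactly into the two main terms. For `τ ≤ 1`, `|R τ| ≤ C e^{-b/τ}` and AM–GM gives
`e^{μτ - b/τ} ≤ e^{-√(2b|μ|)} e^{μτ/2}`; for `τ ≥ 1`, `R` is bounded because `K` decreases, and
`τ^{Re s - 1} e^{μτ} ≤ e^{σ + μ/2} e^{μτ/2}` once `|μ| ≥ 2σ`, where `σ` bounds `Re s` on the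
compact set. Both prefactors decay faster than any power of `|μ|`, and `1/Γ` is bounded on
compacts.
-/

lemma Real.exp_neg_le_factorial_div_pow {x : ℝ} (hx : 0 < x) (n : ℕ) :
    Real.exp (-x) ≤ n.factorial / x ^ n := by
  rw [Real.exp_neg, inv_le_comm₀ (Real.exp_pos x) (by positivity), inv_div]
  exact Real.pow_div_factorial_le_exp x hx.le n

lemma Real.sqrt_two_mul_le_add_div {b r τ : ℝ} (hb : 0 ≤ b) (hr : 0 ≤ r) (hτ : 0 < τ) :
    √(2 * b * r) ≤ r / 2 * τ + b / τ := by
  obtain ⟨u, rfl⟩ : ∃ u, b = u * τ := ⟨b / τ, by field_simp⟩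
  have hu : 0 ≤ u := (mul_nonneg_iff_of_pos_right hτ).1 hb
  rw [mul_div_cancel_right₀ u hτ.ne', Real.sqrt_le_iff]
  exact ⟨by positivity, by nlinarith [sq_nonneg (r / 2 * τ - u)]⟩

lemma norm_ofReal_cpow_le_one {τ : ℝ} (hτ₀ : 0 < τ) (hτ₁ : τ ≤ 1) {s : ℂ} (hs : 0 ≤ s.re) :
    ‖(τ : ℂ) ^ s‖ ≤ 1 := by
  rw [norm_cpow_eq_rpow_re_of_pos hτ₀]
  exact Real.rpow_le_one hτ₀.le hτ₁ hs

lemma norm_ofReal_cpow_le_exp_mul {τ : ℝ} (hτ : 0 < τ) {s : ℂ} (hs : 0 ≤ s.re) :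
    ‖(τ : ℂ) ^ s‖ ≤ Real.exp (s.re * τ) := by
  rw [norm_cpow_eq_rpow_re_of_pos hτ, Real.rpow_def_of_pos hτ, mul_comm]
  gcongr
  exact Real.log_le_self hτ.le

lemma integrableOn_exp_mul_cpow {μ : ℝ} (hμ : μ < 0) {s : ℂ} (hs : 0 < s.re) :
    IntegrableOn (fun τ : ℝ => cexp (μ * τ : ℝ) * (τ : ℂ) ^ (s - 1)) (Ioi 0) := by
  have hmajorant : IntegrableOn (fun τ : ℝ => τ ^ (s.re - 1) * Real.exp (-(-μ) * τ)) (Ioi 0) := by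
    simpa using integrableOn_rpow_mul_exp_neg_mul_rpow (p := 1) (by linarith) one_pos
      (neg_pos.2 hμ)
  refine hmajorant.mono' ?_ ?_
  · refine ContinuousOn.aestronglyMeasurable ?_ measurableSet_Ioi
    exact (by fun_prop : Continuous fun τ : ℝ => cexp (μ * τ : ℝ)).continuousOn.mul
      (continuous_ofReal.continuousOn.cpow_const fun τ hτ => ofReal_mem_slitPlane.2 hτ)
  · filter_upwards [ae_restrict_mem measurableSet_Ioi] with τ hτ
    rw [norm_mul, norm_exp, norm_cpow_eq_rpow_re_of_pos hτ]
    simp [mul_comm]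

lemma integral_exp_mul_cpow {μ : ℝ} (hμ : μ < 0) {s : ℂ} (hs : 0 < s.re) :
    ∫ τ in Ioi (0 : ℝ), cexp (μ * τ : ℝ) * (τ : ℂ) ^ (s - 1) = Gamma s / ((-μ : ℝ) : ℂ) ^ s := by
  have harg : ((-μ : ℝ) : ℂ).arg ≠ π := by
    rw [arg_ofReal_of_nonneg (by linarith)]
    exact Real.pi_ne_zero.symm
  rw [div_eq_inv_mul, ← inv_cpow _ _ harg, ← one_div,
    ← integral_cpow_mul_exp_neg_mul_Ioi hs (neg_pos.2 hμ)]
  refine setIntegral_congr_fun measurableSet_Ioi fun τ _ => ?_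
  rw [mul_comm]
  push_cast
  ring_nf

section LaplaceRemainder

variable {g : ℝ → ℂ} {μ b C M σ : ℝ}

lemma norm_exp_mul_le_of_bounds (hμ : μ ≤ 0) (hμσ : 2 * σ ≤ -μ) (hb : 0 ≤ b) (hC : 0 ≤ C)
    (hM : 0 ≤ M)
    (hsmall : ∀ τ, 0 < τ → τ ≤ 1 → ‖g τ‖ ≤ C * Real.exp (-b / τ))
    (hlarge : ∀ τ, 1 < τ → ‖g τ‖ ≤ M * Real.exp (σ * τ)) {τ : ℝ} (hτ : 0 < τ) :
    ‖cexp (μ * τ : ℝ) * g τ‖ ≤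
      (C * Real.exp (-√(2 * b * -μ)) + M * Real.exp (σ + μ / 2)) * Real.exp (μ / 2 * τ) := by
  rw [norm_mul, norm_exp, ofReal_re, add_mul]
  rcases le_or_gt τ 1 with hτ₁ | hτ₁
  · have hexp : Real.exp (μ * τ) * Real.exp (-b / τ) ≤
        Real.exp (-√(2 * b * -μ)) * Real.exp (μ / 2 * τ) := by
      rw [← Real.exp_add, ← Real.exp_add, Real.exp_le_exp]
      have := Real.sqrt_two_mul_le_add_div hb (r := -μ) (neg_nonneg.2 hμ) hτ
      linarith [neg_div τ b]
    calc Real.exp (μ * τ) * ‖g τ‖ ≤ Real.exp (μ * τ) * (C * Real.exp (-b / τ)) := by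
          gcongr; exact hsmall τ hτ hτ₁
      _ ≤ C * (Real.exp (-√(2 * b * -μ)) * Real.exp (μ / 2 * τ)) := by
          rw [mul_left_comm]; gcongr
      _ ≤ _ := by rw [← mul_assoc]; exact le_add_of_nonneg_right (by positivity)
  · have hexp : Real.exp (μ * τ) * Real.exp (σ * τ) ≤
        Real.exp (σ + μ / 2) * Real.exp (μ / 2 * τ) := by
      rw [← Real.exp_add, ← Real.exp_add, Real.exp_le_exp]
      nlinarith
    calc Real.exp (μ * τ) * ‖g τ‖ ≤ Real.exp (μ * τ) * (M * Real.exp (σ * τ)) := by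
          gcongr; exact hlarge τ hτ₁
      _ ≤ M * (Real.exp (σ + μ / 2) * Real.exp (μ / 2 * τ)) := by
          rw [mul_left_comm]; gcongr
      _ ≤ _ := by rw [← mul_assoc]; exact le_add_of_nonneg_left (by positivity)

lemma integrableOn_exp_mul_of_bounds (hμ : μ < 0) (hμσ : 2 * σ ≤ -μ) (hb : 0 ≤ b) (hC : 0 ≤ C)
    (hM : 0 ≤ M) (hg : AEStronglyMeasurable g (volume.restrict (Ioi 0)))
    (hsmall : ∀ τ, 0 < τ → τ ≤ 1 → ‖g τ‖ ≤ C * Real.exp (-b / τ))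
    (hlarge : ∀ τ, 1 < τ → ‖g τ‖ ≤ M * Real.exp (σ * τ)) :
    IntegrableOn (fun τ => cexp (μ * τ : ℝ) * g τ) (Ioi 0) := by
  refine ((integrableOn_exp_mul_Ioi (a := μ / 2) (by linarith) 0).const_mul
    (C * Real.exp (-√(2 * b * -μ)) + M * Real.exp (σ + μ / 2))).mono' ?_ ?_
  · exact (by fun_prop : Continuous fun τ : ℝ => cexp (μ * τ : ℝ)).aestronglyMeasurable.mul hg
  · filter_upwards [ae_restrict_mem measurableSet_Ioi] with τ hτ
    exact norm_exp_mul_le_of_bounds hμ.le hμσ hb hC hM hsmall hlarge hτ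

lemma norm_integral_exp_mul_le_of_bounds (hμ : μ < 0) (hμσ : 2 * σ ≤ -μ) (hb : 0 ≤ b)
    (hC : 0 ≤ C) (hM : 0 ≤ M)
    (hsmall : ∀ τ, 0 < τ → τ ≤ 1 → ‖g τ‖ ≤ C * Real.exp (-b / τ))
    (hlarge : ∀ τ, 1 < τ → ‖g τ‖ ≤ M * Real.exp (σ * τ)) :
    ‖∫ τ in Ioi 0, cexp (μ * τ : ℝ) * g τ‖ ≤
      (C * Real.exp (-√(2 * b * -μ)) + M * Real.exp (σ + μ / 2)) * (2 / -μ) := by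
  have hexp_integral : ∫ τ in Ioi 0, Real.exp (μ / 2 * τ) = 2 / -μ := by
    rw [integral_exp_mul_Ioi (by linarith), mul_zero, Real.exp_zero]
    field_simp
  rw [← hexp_integral, ← integral_const_mul]
  refine norm_integral_le_of_norm_le
    ((integrableOn_exp_mul_Ioi (by linarith) 0).const_mul _) ?_
  filter_upwards [ae_restrict_mem measurableSet_Ioi] with τ hτ
  exact norm_exp_mul_le_of_bounds hμ.le hμσ hb hC hM hsmall hlarge hτ

lemma exp_neg_sqrt_add_exp_le_div_pow (hb : 0 < b) (hC : 0 ≤ C) (hM : 0 ≤ M) (hμ : μ < 0)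
    (N : ℕ) :
    C * Real.exp (-√(2 * b * -μ)) + M * Real.exp (σ + μ / 2) ≤
      (C * (2 * N).factorial / (2 * b) ^ N + M * Real.exp σ * N.factorial * 2 ^ N) / (-μ) ^ N := by
  have hr : 0 < -μ := neg_pos.2 hμ
  have hsqrt : Real.exp (-√(2 * b * -μ)) ≤ (2 * N).factorial / ((2 * b) ^ N * (-μ) ^ N) := by
    have hsq : √(2 * b * -μ) ^ 2 = 2 * b * -μ := Real.sq_sqrt (by positivity)
    calc Real.exp (-√(2 * b * -μ)) ≤ (2 * N).factorial / √(2 * b * -μ) ^ (2 * N) :=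
          Real.exp_neg_le_factorial_div_pow (by positivity) _
      _ = _ := by rw [pow_mul, hsq, mul_pow]
  have hhalf : Real.exp (σ + μ / 2) ≤ Real.exp σ * (N.factorial / (-μ / 2) ^ N) := by
    rw [Real.exp_add, show μ / 2 = -(-μ / 2) by ring]
    gcongr
    exact Real.exp_neg_le_factorial_div_pow (by positivity) N
  calc _ ≤ C * ((2 * N).factorial / ((2 * b) ^ N * (-μ) ^ N)) +
        M * (Real.exp σ * (N.factorial / (-μ / 2) ^ N)) := by gcongr
    _ = _ := by rw [div_pow]; field_simp

theorem norm_integral_exp_mul_le_div_pow (hμ : μ ≤ -2) (hμσ : 2 * σ ≤ -μ) (hb : 0 < b)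
    (hC : 0 ≤ C) (hM : 0 ≤ M)
    (hsmall : ∀ τ, 0 < τ → τ ≤ 1 → ‖g τ‖ ≤ C * Real.exp (-b / τ))
    (hlarge : ∀ τ, 1 < τ → ‖g τ‖ ≤ M * Real.exp (σ * τ)) (N : ℕ) :
    ‖∫ τ in Ioi 0, cexp (μ * τ : ℝ) * g τ‖ ≤
      (C * (2 * N).factorial / (2 * b) ^ N + M * Real.exp σ * N.factorial * 2 ^ N) / (-μ) ^ N := by
  have hμ₀ : μ < 0 := by linarith
  calc _ ≤ (C * Real.exp (-√(2 * b * -μ)) + M * Real.exp (σ + μ / 2)) * (2 / -μ) :=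
        norm_integral_exp_mul_le_of_bounds hμ₀ hμσ hb.le hC hM hsmall hlarge
    _ ≤ C * Real.exp (-√(2 * b * -μ)) + M * Real.exp (σ + μ / 2) :=
        mul_le_of_le_one_right (by positivity) ((div_le_one (by linarith)).2 (by linarith))
    _ ≤ _ := exp_neg_sqrt_add_exp_le_div_pow hb hC hM hμ₀ N

end LaplaceRemainder

lemma antitoneOn_tsum_exp_neg_mul {lam : ℕ → ℝ} (hlam : ∀ k, 0 ≤ lam k)
    (hsum : ∀ τ : ℝ, 0 < τ → Summable fun k => Real.exp (-lam k * τ)) :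
    AntitoneOn (fun τ => ∑' k, Real.exp (-lam k * τ)) (Ioi 0) := by
  intro τ₁ hτ₁ τ₂ hτ₂ hτ
  refine (hsum τ₂ hτ₂).tsum_le_tsum (fun k => ?_) (hsum τ₁ hτ₁)
  exact Real.exp_le_exp.2 (by nlinarith [hlam k])

noncomputable def heatRemainder (K : ℝ → ℝ) (A c τ : ℝ) : ℝ := K τ - A / (4 * π * τ) - c

section HeatRemainder

variable {K : ℝ → ℝ} {A c : ℝ} {s : ℂ}

lemma integral_exp_mul_cpow_mul_eq_add_integral_heatRemainder {μ : ℝ} (hμ : μ < 0)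
    (hs : 1 < s.re)
    (hR : IntegrableOn
      (fun τ => cexp (μ * τ : ℝ) * ((τ : ℂ) ^ (s - 1) * (heatRemainder K A c τ : ℂ))) (Ioi 0)) :
    ∫ τ in Ioi 0, cexp (μ * τ : ℝ) * (τ : ℂ) ^ (s - 1) * (K τ : ℂ) =
      (A / (4 * π) : ℂ) * (Gamma (s - 1) / ((-μ : ℝ) : ℂ) ^ (s - 1)) +
        c * (Gamma s / ((-μ : ℝ) : ℂ) ^ s) +
        ∫ τ in Ioi 0, cexp (μ * τ : ℝ) * ((τ : ℂ) ^ (s - 1) * (heatRemainder K A c τ : ℂ)) := by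
  have hs₀ : 0 < s.re := by linarith
  have hs₁ : 0 < (s - 1).re := by simpa using hs
  have hsplit : EqOn (fun τ : ℝ => cexp (μ * τ : ℝ) * (τ : ℂ) ^ (s - 1) * (K τ : ℂ))
      (fun τ => (A / (4 * π) : ℂ) * (cexp (μ * τ : ℝ) * (τ : ℂ) ^ (s - 1 - 1)) +
        c * (cexp (μ * τ : ℝ) * (τ : ℂ) ^ (s - 1)) +
        cexp (μ * τ : ℝ) * ((τ : ℂ) ^ (s - 1) * (heatRemainder K A c τ : ℂ))) (Ioi 0) := by
    intro τ hτ
    have hτ₀ : (τ : ℂ) ≠ 0 := ofReal_ne_zero.2 (ne_of_gt hτ)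
    simp only [heatRemainder, cpow_sub _ _ hτ₀, cpow_one]
    push_cast
    field_simp
    ring
  have hpole := (integrableOn_exp_mul_cpow hμ hs₁).const_mul (A / (4 * π) : ℂ)
  have hconst := (integrableOn_exp_mul_cpow hμ hs₀).const_mul (c : ℂ)
  rw [setIntegral_congr_fun measurableSet_Ioi hsplit, integral_add ?_ hR,
    integral_add hpole hconst, integral_const_mul, integral_const_mul,
    integral_exp_mul_cpow hμ hs₁, integral_exp_mul_cpow hμ hs₀]
  exact hpole.add hconst

lemma Gamma_inv_mul_integral_sub_eq {μ : ℝ} (hμ : μ < 0) (hs : 1 < s.re)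
    (hR : IntegrableOn
      (fun τ => cexp (μ * τ : ℝ) * ((τ : ℂ) ^ (s - 1) * (heatRemainder K A c τ : ℂ))) (Ioi 0)) :
    (Gamma s)⁻¹ * (∫ τ in Ioi 0, cexp (μ * τ : ℝ) * (τ : ℂ) ^ (s - 1) * (K τ : ℂ)) -
        ((A : ℂ) * Gamma (s - 1) / (4 * (π : ℂ) * Gamma s * ((-μ : ℝ) : ℂ) ^ (s - 1)) +
          (c : ℂ) * ((-μ : ℝ) : ℂ) ^ (-s)) =
      (Gamma s)⁻¹ *
        ∫ τ in Ioi 0, cexp (μ * τ : ℝ) * ((τ : ℂ) ^ (s - 1) * (heatRemainder K A c τ : ℂ)) := by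
  have hΓ : Gamma s ≠ 0 := Gamma_ne_zero_of_re_pos (by linarith)
  have hμ' : ((-μ : ℝ) : ℂ) ≠ 0 := ofReal_ne_zero.2 (by linarith)
  rw [integral_exp_mul_cpow_mul_eq_add_integral_heatRemainder hμ hs hR, cpow_neg]
  field_simp [cpow_ne_zero_iff_of_exponent_ne_zero]
  ring

lemma aestronglyMeasurable_cpow_mul_heatRemainder (hK : AntitoneOn K (Ioi 0)) :
    AEStronglyMeasurable (fun τ : ℝ => (τ : ℂ) ^ (s - 1) * (heatRemainder K A c τ : ℂ))
      (volume.restrict (Ioi 0)) := by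
  refine ContinuousOn.aestronglyMeasurable ?_ measurableSet_Ioi |>.mul ?_
  · exact continuous_ofReal.continuousOn.cpow_const fun τ hτ => ofReal_mem_slitPlane.2 hτ
  · refine (measurable_ofReal.comp_aemeasurable ?_).aestronglyMeasurable
    exact ((aemeasurable_restrict_of_antitoneOn measurableSet_Ioi hK).sub
      (by fun_prop)).sub aemeasurable_const

lemma norm_cpow_mul_heatRemainder_le_of_le_one {b C : ℝ} (hs : 1 ≤ s.re)
    (hK : ∀ τ : ℝ, 0 < τ → τ ≤ 1 → |heatRemainder K A c τ| ≤ C * Real.exp (-b / τ))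
    {τ : ℝ} (hτ₀ : 0 < τ) (hτ₁ : τ ≤ 1) :
    ‖(τ : ℂ) ^ (s - 1) * (heatRemainder K A c τ : ℂ)‖ ≤ C * Real.exp (-b / τ) := by
  rw [norm_mul, norm_real, Real.norm_eq_abs]
  have hcpow : ‖(τ : ℂ) ^ (s - 1)‖ ≤ 1 := norm_ofReal_cpow_le_one hτ₀ hτ₁ (by simpa using hs)
  exact (mul_le_of_le_one_left (abs_nonneg _) hcpow).trans (hK τ hτ₀ hτ₁)

lemma abs_heatRemainder_le_of_one_le (hK₀ : ∀ τ, 0 ≤ K τ) (hK : AntitoneOn K (Ioi 0)) {τ : ℝ}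
    (hτ : 1 ≤ τ) : |heatRemainder K A c τ| ≤ K 1 + |A| / (4 * π) + |c| := by
  have hτ₀ : 0 < τ := by linarith
  have hKτ : K τ ≤ K 1 := hK (mem_Ioi.2 one_pos) (mem_Ioi.2 hτ₀) hτ
  have hpole : |A / (4 * π * τ)| ≤ |A| / (4 * π) := by
    rw [abs_div, abs_of_pos (by positivity : (0 : ℝ) < 4 * π * τ)]
    exact div_le_div_of_nonneg_left (abs_nonneg A) (by positivity)
      (le_mul_of_one_le_right (by positivity) hτ)
  calc |heatRemainder K A c τ| ≤ |K τ| + |A / (4 * π * τ)| + |c| :=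
        (abs_sub _ _).trans (by gcongr; exact abs_sub _ _)
    _ ≤ K 1 + |A| / (4 * π) + |c| := by rw [abs_of_nonneg (hK₀ τ)]; gcongr

lemma norm_cpow_mul_heatRemainder_le_of_one_lt {σ : ℝ} (hs : 1 ≤ s.re) (hsσ : s.re - 1 ≤ σ)
    (hK₀ : ∀ τ, 0 ≤ K τ) (hK : AntitoneOn K (Ioi 0)) {τ : ℝ} (hτ : 1 < τ) :
    ‖(τ : ℂ) ^ (s - 1) * (heatRemainder K A c τ : ℂ)‖ ≤
      (K 1 + |A| / (4 * π) + |c|) * Real.exp (σ * τ) := by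
  have hτ₀ : 0 < τ := by linarith
  have hcpow : ‖(τ : ℂ) ^ (s - 1)‖ ≤ Real.exp (σ * τ) :=
    (norm_ofReal_cpow_le_exp_mul hτ₀ (by simpa using hs)).trans (by gcongr; simpa using hsσ)
  rw [norm_mul, norm_real, Real.norm_eq_abs, mul_comm]
  exact mul_le_mul (abs_heatRemainder_le_of_one_le hK₀ hK hτ.le) hcpow (norm_nonneg _)
    ((abs_nonneg _).trans (abs_heatRemainder_le_of_one_le hK₀ hK hτ.le))

end HeatRemainder

/-- If the heat trace `K(τ) = ∑ₖ e^{-λ_k τ}` satisfies `K(τ) = A/(4πτ) + c₀ + O(e^{-b/τ})` as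
`τ → 0⁺`, then `ζ_{Δ-μ}(s) = Γ(s)⁻¹ ∫₀^∞ e^{μτ} τ^{s-1} K(τ) dτ` differs from
`A Γ(s-1)/(4π Γ(s) (-μ)^{s-1}) + c₀ (-μ)^{-s}` by `O(|μ|^{-N})` for every `N` as `μ → -∞`,
uniformly for `s` in compact subsets of `{Re s > 1}`. -/
theorem heat_trace_resolvent_zeta_asymptotics (lam : ℕ → ℝ) (hpos : ∀ k, 0 < lam k)
    (hsum : ∀ τ : ℝ, 0 < τ → Summable fun k => Real.exp (-lam k * τ))
    (A c₀ b : ℝ) (hb : 0 < b) (CK : ℝ)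
    (hK : ∀ τ : ℝ, 0 < τ → τ ≤ 1 →
      |(∑' k, Real.exp (-lam k * τ)) - A / (4 * π * τ) - c₀| ≤ CK * Real.exp (-b / τ)) :
    ∀ (N : ℕ) (S : Set ℂ), IsCompact S → S ⊆ {s : ℂ | 1 < s.re} →
      ∃ C μ₀ : ℝ, μ₀ < 0 ∧ ∀ μ : ℝ, μ ≤ μ₀ → ∀ s ∈ S,
        ‖(Complex.Gamma s)⁻¹ *
            (∫ τ in Set.Ioi (0 : ℝ), Complex.exp ((μ * τ : ℝ) : ℂ) * (τ : ℂ) ^ (s - 1) *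
              ((∑' k, Real.exp (-lam k * τ) : ℝ) : ℂ)) -
          ((A : ℂ) * Complex.Gamma (s - 1) /
              (4 * (π : ℂ) * Complex.Gamma s * ((-μ : ℝ) : ℂ) ^ (s - 1)) +
            (c₀ : ℂ) * ((-μ : ℝ) : ℂ) ^ (-s))‖ ≤ C * |μ| ^ (-(N : ℝ)) := by
  intro N S hS hS₁
  have hK₀ : ∀ τ, 0 ≤ ∑' k, Real.exp (-lam k * τ) := fun τ => tsum_nonneg fun k => by positivity
  have hanti := antitoneOn_tsum_exp_neg_mul (fun k => (hpos k).le) hsum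
  have hCK : 0 ≤ CK :=
    (mul_nonneg_iff_of_pos_right (Real.exp_pos _)).1 ((abs_nonneg _).trans (hK 1 one_pos le_rfl))
  set M := (∑' k, Real.exp (-lam k * 1)) + |A| / (4 * π) + |c₀|
  have hM : 0 ≤ M := by have := hK₀ 1; positivity
  obtain ⟨σ, hσ⟩ := hS.bddAbove_image continuous_re.continuousOn
  obtain ⟨G, hG⟩ :=
    hS.exists_bound_of_continuousOn differentiable_one_div_Gamma.continuous.continuousOn
  refine ⟨G * ((CK * (2 * N).factorial / (2 * b) ^ N + M * Real.exp σ * N.factorial * 2 ^ N)),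
    -2 * max σ 1, by linarith [le_max_right σ 1], fun μ hμ s hs => ?_⟩
  have hs₁ : 1 < s.re := hS₁ hs
  have hμ₂ : μ ≤ -2 := by linarith [le_max_right σ 1]
  have hμσ : 2 * σ ≤ -μ := by linarith [le_max_left σ 1]
  have hsσ : s.re - 1 ≤ σ := by linarith [hσ (mem_image_of_mem re hs)]
  have hsmall := fun τ => norm_cpow_mul_heatRemainder_le_of_le_one (s := s) (τ := τ) hs₁.le hK
  have hlarge := fun τ => norm_cpow_mul_heatRemainder_le_of_one_lt (A := A) (c := c₀) (τ := τ)
    hs₁.le hsσ hK₀ hanti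
  have hint := integrableOn_exp_mul_of_bounds (by linarith) hμσ hb.le hCK hM
    (aestronglyMeasurable_cpow_mul_heatRemainder hanti) hsmall hlarge
  rw [Gamma_inv_mul_integral_sub_eq (by linarith) hs₁ hint, norm_mul,
    abs_of_neg (by linarith : μ < 0), Real.rpow_neg (by linarith), Real.rpow_natCast, mul_assoc,
    ← div_eq_mul_inv]
  exact mul_le_mul (hG s hs) (norm_integral_exp_mul_le_div_pow hμ₂ hμσ hb hCK hM hsmall hlarge N)
    (norm_nonneg _) ((norm_nonneg _).trans (hG s hs))
end
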